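/- arXiv:1407.2323 — 2 statements merged into one kernel-verified Lean document; each statement's English description precedes it below -/
import Mathlib

section
/- For fixed 0<p<1, fixed positive integer l, and C > l / ln(1/(1-(1-p)^l)), consider for each n a Bernoulli family B_1,...,B_m of size m = ⌈C·ln(n)⌉ over {1,...,n} with parameter p. Then the probability that there exists a set S ⊆ {1,...,n} with |S| ≤ l intersecting every B_j (i.e., S ∩ B_j ≠ ∅ for all j) tends to 0 as n → ∞. -/
open MeasureTheory ProbabilityTheory Filter MeasurableSpace

section Aux

variable {Ω : Type*} [MeasurableSpace Ω] {μ : Measure Ω} [IsProbabilityMeasure μ]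
variable {n k : ℕ} {A : Fin n × Fin k → Set Ω}

lemma aux_reindexI (g : Fin n × Fin k → Set Ω) (S : Finset (Fin n)) (j : Fin k) :
    (⋂ ij ∈ S.image (fun i => (i, j)), g ij) = ⋂ i ∈ S, g (i, j) := by
  ext ω
  simp only [Set.mem_iInter, Finset.mem_image]
  constructor
  · intro h i hi
    exact h (i, j) ⟨i, hi, rfl⟩
  · rintro h ij ⟨i, hi, rfl⟩
    exact h i hi

lemma aux_prod_reindex (g : Fin n × Fin k → ENNReal) (S : Finset (Fin n)) (j : Fin k) :
    (∏ ij ∈ S.image (fun i => (i, j)), g ij) = ∏ i ∈ S, g (i, j) :=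
  Finset.prod_image (fun a _ b _ hab => (Prod.ext_iff.1 hab).1)

lemma aux_meas_biInter (hind : iIndepSet A μ) (j : Fin k) (t : Finset (Fin n)) :
    μ (⋂ i ∈ t, A (i, j)) = ∏ i ∈ t, μ (A (i, j)) := by
  have h := (iIndepSet_iff_iIndep A μ).1 hind
  rw [← aux_reindexI A t j,
    h.meas_biInter (fun ij _ => measurableSet_generateFrom rfl), aux_prod_reindex]

lemma aux_group (hA : ∀ ij, MeasurableSet (A ij)) (hind : iIndepSet A μ) :
    iIndep (fun j : Fin k => generateFrom
      {s | ∃ t : Finset (Fin n), s = ⋂ i ∈ t, A (i, j)}) μ := by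
  classical
  refine iIndepSets.iIndep (fun j => ?_)
    (fun j : Fin k => {s | ∃ t : Finset (Fin n), s = ⋂ i ∈ t, A (i, j)})
    (fun j => ?_) (fun j => rfl) ?_
  · refine generateFrom_le ?_
    rintro s ⟨t, rfl⟩
    exact Finset.measurableSet_biInter t (fun i _ => hA _)
  · rintro s ⟨ts, rfl⟩ u ⟨tu, rfl⟩ -
    refine ⟨ts ∪ tu, ?_⟩
    ext ω
    simp only [Set.mem_inter_iff, Set.mem_iInter, Finset.mem_union]
    constructor
    · rintro ⟨h1, h2⟩ i hi
      rcases hi with hi | hi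
      exacts [h1 i hi, h2 i hi]
    · intro h
      exact ⟨fun i hi => h i (Or.inl hi), fun i hi => h i (Or.inr hi)⟩
  · rw [iIndepSets_iff]
    intro T f hf
    choose! t ht using hf
    set P : Finset (Fin n × Fin k) := T.biUnion (fun j => (t j).image (fun i => (i, j))) with hP
    have hre : (⋂ j ∈ T, f j) = ⋂ ij ∈ P, A ij := by
      ext ω
      simp only [Set.mem_iInter, Finset.mem_biUnion, Finset.mem_image, hP]
      constructor
      · rintro h ij ⟨j, hjT, i, hit, rfl⟩
        have h2 := h j hjT
        rw [ht j hjT] at h2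
        exact Set.mem_iInter₂.1 h2 i hit
      · intro h j hjT
        rw [ht j hjT]
        exact Set.mem_iInter₂.2 fun i hit => h (i, j) ⟨j, hjT, i, hit, rfl⟩
    have hdisj : (↑T : Set (Fin k)).PairwiseDisjoint
        (fun j => (t j).image (fun i => (i, j))) := by
      intro a _ b _ hab
      simp only [Finset.disjoint_left, Finset.mem_image]
      rintro ij ⟨i, _, rfl⟩ ⟨i', _, h⟩
      exact hab (congrArg Prod.snd h).symm
    have hmeasA := (iIndepSet_iff_iIndep A μ).1 hind
    rw [hre, hmeasA.meas_biInter (fun ij _ => measurableSet_generateFrom rfl),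
      Finset.prod_biUnion hdisj]
    refine Finset.prod_congr rfl fun j hj => ?_
    rw [aux_prod_reindex, ht j hj, aux_meas_biInter hind]

lemma aux_union {p : ℝ} (hA : ∀ ij, MeasurableSet (A ij)) (hind : iIndepSet A μ)
    (hp0 : 0 ≤ p) (hp1 : p ≤ 1) (hprob : ∀ ij, μ (A ij) = ENNReal.ofReal p)
    (S : Finset (Fin n)) (j : Fin k) :
    μ (⋃ i ∈ S, A (i, j)) = 1 - ENNReal.ofReal ((1 - p) ^ S.card) := by
  have hmeasA := (iIndepSet_iff_iIndep A μ).1 hind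
  have hU : MeasurableSet (⋃ i ∈ S, A (i, j)) :=
    Finset.measurableSet_biUnion S (fun i _ => hA _)
  have hcompl : (⋃ i ∈ S, A (i, j))ᶜ = ⋂ i ∈ S, (A (i, j))ᶜ := by
    simp [Set.compl_iUnion]
  have hcmeas : μ ((⋃ i ∈ S, A (i, j))ᶜ) = ENNReal.ofReal ((1 - p) ^ S.card) := by
    rw [hcompl, ← aux_reindexI (fun ij => (A ij)ᶜ) S j,
      hmeasA.meas_biInter (fun ij _ => (show MeasurableSet[generateFrom {A ij}] (A ij) from measurableSet_generateFrom rfl).compl),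
      aux_prod_reindex (fun ij => μ (A ij)ᶜ) S j]
    have hone : ∀ i : Fin n, μ ((A (i, j))ᶜ) = ENNReal.ofReal (1 - p) := by
      intro i
      rw [prob_compl_eq_one_sub (hA _), hprob, ENNReal.ofReal_sub _ hp0, ENNReal.ofReal_one]
    rw [Finset.prod_congr rfl (fun i _ => hone i), Finset.prod_const,
      ← ENNReal.ofReal_pow (by linarith)]
  have := prob_compl_eq_one_sub (μ := μ) hU.compl
  rw [compl_compl, hcmeas] at this
  exact this

lemma aux_perS {p : ℝ} {l : ℕ} (hA : ∀ ij, MeasurableSet (A ij)) (hind : iIndepSet A μ)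
    (hp0 : 0 ≤ p) (hp1 : p ≤ 1) (hprob : ∀ ij, μ (A ij) = ENNReal.ofReal p)
    (S : Finset (Fin n)) (hS : S.card ≤ l) :
    μ (⋂ j : Fin k, ⋃ i ∈ S, A (i, j)) ≤ ENNReal.ofReal (1 - (1 - p) ^ l) ^ k := by
  have hgroup := aux_group hA hind
  have hmeas_j : ∀ j : Fin k, MeasurableSet[generateFrom
      {s | ∃ t : Finset (Fin n), s = ⋂ i ∈ t, A (i, j)}] (⋃ i ∈ S, A (i, j)) := by
    intro j
    refine Finset.measurableSet_biUnion (m := generateFrom _) S (fun i _ => ?_)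
    exact measurableSet_generateFrom ⟨{i}, by simp⟩
  rw [hgroup.meas_iInter hmeas_j]
  calc (∏ j : Fin k, μ (⋃ i ∈ S, A (i, j)))
      ≤ ∏ _j : Fin k, ENNReal.ofReal (1 - (1 - p) ^ l) := by
        refine Finset.prod_le_prod' fun j _ => ?_
        rw [aux_union hA hind hp0 hp1 hprob S j]
        have h1 : ENNReal.ofReal (1 - (1 - p) ^ l)
            = 1 - ENNReal.ofReal ((1 - p) ^ l) := by
          rw [ENNReal.ofReal_sub _ (pow_nonneg (by linarith) _), ENNReal.ofReal_one]
        rw [h1]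
        exact tsub_le_tsub_left (ENNReal.ofReal_le_ofReal
          (pow_le_pow_of_le_one (by linarith) (by linarith) hS)) 1
    _ = ENNReal.ofReal (1 - (1 - p) ^ l) ^ k := by
        rw [Finset.prod_const, Finset.card_univ, Fintype.card_fin]

end Aux

/-- for fixed `0 < p < 1`, fixed `l ≥ 1`, and
`C > l / ln(1/(1-(1-p)^l))`, a Bernoulli family of size `m = ⌈C·ln n⌉` over `{1,...,n}`
with parameter `p` admits an intersecting set of size at most `l` with probability
tending to `0` as `n → ∞`. -/
theorem stmt_2 (p C : ℝ) (l : ℕ) (hl : 1 ≤ l) (hp0 : 0 < p) (hp1 : p < 1)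
    (hC : C > l / Real.log (1 / (1 - (1 - p) ^ l)))
    (Ω : ℕ → Type*) [∀ n, MeasurableSpace (Ω n)]
    (μ : ∀ n, Measure (Ω n)) [∀ n, IsProbabilityMeasure (μ n)]
    (B : ∀ n : ℕ, Fin ⌈C * Real.log n⌉₊ → Ω n → Finset (Fin n))
    (hmeas : ∀ (n : ℕ) (j : Fin ⌈C * Real.log n⌉₊) (i : Fin n),
      MeasurableSet {ω | i ∈ B n j ω})
    (hindep : ∀ n : ℕ, iIndepSet
      (fun ij : Fin n × Fin ⌈C * Real.log n⌉₊ => {ω | ij.1 ∈ B n ij.2 ω}) (μ n))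
    (hprob : ∀ (n : ℕ) (j : Fin ⌈C * Real.log n⌉₊) (i : Fin n),
      μ n {ω | i ∈ B n j ω} = ENNReal.ofReal p) :
    Tendsto
      (fun n : ℕ => (μ n {ω | ∃ S : Finset (Fin n), S.card ≤ l ∧
        ∀ j : Fin ⌈C * Real.log n⌉₊, (S ∩ B n j ω).Nonempty}).toReal)
      atTop (nhds 0) := by
  classical
  set q : ℝ := 1 - (1 - p) ^ l with hq
  have hql : (0:ℝ) < (1 - p) ^ l := pow_pos (by linarith) l
  have hqu : (1 - p) ^ l < 1 := pow_lt_one₀ (by linarith) (by linarith) (by omega)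
  have hq0 : 0 < q := by simp only [hq]; linarith
  have hq1 : q < 1 := by simp only [hq]; linarith
  have hlogq : Real.log q < 0 := Real.log_neg hq0 hq1
  set c : ℝ := l + C * Real.log q with hc_def
  have hc : c < 0 := by
    have hpos : 0 < Real.log (1 / q) := Real.log_pos (one_lt_one_div hq0 hq1)
    have h1 : (l : ℝ) < C * Real.log (1 / q) := (div_lt_iff₀ hpos).1 hC
    rw [one_div, Real.log_inv] at h1
    simp only [hc_def]; nlinarith
  -- the key per-n bound
  have key : ∀ n : ℕ, 1 ≤ n →
      (μ n {ω | ∃ S : Finset (Fin n), S.card ≤ l ∧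
        ∀ j : Fin ⌈C * Real.log n⌉₊, (S ∩ B n j ω).Nonempty}).toReal
      ≤ ((l : ℝ) + 1) * Real.exp (c * Real.log n) := by
    intro n hn
    set m : ℕ := ⌈C * Real.log n⌉₊ with hm
    set A : Fin n × Fin m → Set (Ω n) := fun ij => {ω | ij.1 ∈ B n ij.2 ω} with hA
    have hAmeas : ∀ ij, MeasurableSet (A ij) := fun ij => hmeas n ij.2 ij.1
    set 𝒮 : Finset (Finset (Fin n)) := Finset.univ.filter (fun S => S.card ≤ l) with h𝒮
    -- event inclusion
    have hsub : {ω | ∃ S : Finset (Fin n), S.card ≤ l ∧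
        ∀ j : Fin m, (S ∩ B n j ω).Nonempty}
        ⊆ ⋃ S ∈ 𝒮, ⋂ j : Fin m, ⋃ i ∈ S, A (i, j) := by
      rintro ω ⟨S, hSc, hSint⟩
      refine Set.mem_biUnion (show S ∈ 𝒮 from Finset.mem_filter.2 ⟨Finset.mem_univ _, hSc⟩) ?_
      refine Set.mem_iInter.2 fun j => ?_
      obtain ⟨i, hi⟩ := hSint j
      rw [Finset.mem_inter] at hi
      exact Set.mem_biUnion hi.1 hi.2
    have hbound : μ n {ω | ∃ S : Finset (Fin n), S.card ≤ l ∧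
        ∀ j : Fin m, (S ∩ B n j ω).Nonempty}
        ≤ (𝒮.card : ENNReal) * ENNReal.ofReal q ^ m := by
      refine le_trans (measure_mono hsub) ?_
      refine le_trans (measure_biUnion_finset_le 𝒮 _) ?_
      have hS : ∀ S ∈ 𝒮, μ n (⋂ j : Fin m, ⋃ i ∈ S, A (i, j))
          ≤ ENNReal.ofReal q ^ m := by
        intro S hSm
        have hScard : S.card ≤ l := by
          simpa [h𝒮] using hSm
        exact aux_perS hAmeas (hindep n) hp0.le hp1.le
          (fun ij => hprob n ij.2 ij.1) S hScard
      refine le_trans (Finset.sum_le_sum hS) ?_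
      rw [Finset.sum_const, nsmul_eq_mul]
    -- pass to reals
    have hrhs_ne : (𝒮.card : ENNReal) * ENNReal.ofReal q ^ m ≠ ⊤ :=
      ENNReal.mul_ne_top (ENNReal.natCast_ne_top _)
        (ENNReal.pow_ne_top ENNReal.ofReal_ne_top)
    have hreal : (μ n {ω | ∃ S : Finset (Fin n), S.card ≤ l ∧
        ∀ j : Fin m, (S ∩ B n j ω).Nonempty}).toReal
        ≤ (𝒮.card : ℝ) * q ^ m := by
      have := ENNReal.toReal_mono hrhs_ne hbound
      rwa [ENNReal.toReal_mul, ENNReal.toReal_pow, ENNReal.toReal_natCast,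
        ENNReal.toReal_ofReal hq0.le] at this
    -- card bound
    have hcard : 𝒮.card ≤ (l + 1) * n ^ l := by
      have hsub2 : 𝒮 ⊆ (Finset.range (l + 1)).biUnion
          (fun s => (Finset.univ : Finset (Fin n)).powersetCard s) := by
        intro S hS
        rw [h𝒮, Finset.mem_filter] at hS
        refine Finset.mem_biUnion.2 ⟨S.card, Finset.mem_range.2 (by omega), ?_⟩
        rw [Finset.mem_powersetCard]
        exact ⟨Finset.subset_univ S, rfl⟩
      refine le_trans (Finset.card_le_card hsub2) ?_
      refine le_trans (Finset.card_biUnion_le) ?_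
      have hterm : ∀ s ∈ Finset.range (l + 1),
          ((Finset.univ : Finset (Fin n)).powersetCard s).card ≤ n ^ l := by
        intro s hs
        rw [Finset.card_powersetCard, Finset.card_univ, Fintype.card_fin]
        exact le_trans (Nat.choose_le_pow _ _)
          (Nat.pow_le_pow_right hn (Nat.lt_succ_iff.1 (Finset.mem_range.1 hs)))
      refine le_trans (Finset.sum_le_sum hterm) ?_
      rw [Finset.sum_const, Finset.card_range, smul_eq_mul]
    -- real analysis chain
    have hnR : (1:ℝ) ≤ (n:ℝ) := by exact_mod_cast hn
    have hqm : q ^ m ≤ Real.exp (C * Real.log n * Real.log q) := by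
      have h1 : q ^ m = Real.exp ((m : ℝ) * Real.log q) := by
        rw [Real.exp_nat_mul, Real.exp_log hq0]
      rw [h1, Real.exp_le_exp]
      exact mul_le_mul_of_nonpos_right (Nat.le_ceil _) hlogq.le
    have hnl : ((n:ℝ)) ^ l = Real.exp (l * Real.log n) := by
      rw [← Real.log_pow, Real.exp_log (pow_pos (by linarith) l)]
    calc (μ n {ω | ∃ S : Finset (Fin n), S.card ≤ l ∧
            ∀ j : Fin m, (S ∩ B n j ω).Nonempty}).toReal
        ≤ (𝒮.card : ℝ) * q ^ m := hreal
      _ ≤ ((l + 1) * n ^ l : ℕ) * q ^ m := by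
          refine mul_le_mul_of_nonneg_right ?_ (pow_nonneg hq0.le m)
          exact_mod_cast hcard
      _ = ((l : ℝ) + 1) * ((n:ℝ)) ^ l * q ^ m := by push_cast; ring
      _ ≤ ((l : ℝ) + 1) * ((n:ℝ)) ^ l * Real.exp (C * Real.log n * Real.log q) := by
          refine mul_le_mul_of_nonneg_left hqm ?_
          positivity
      _ = ((l : ℝ) + 1) * Real.exp (c * Real.log n) := by
          rw [hnl, mul_assoc, ← Real.exp_add]
          congr 2
          simp only [hc_def]; ring
  -- squeeze
  have hg : Tendsto (fun n : ℕ => ((l : ℝ) + 1) * Real.exp (c * Real.log n))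
      atTop (nhds 0) := by
    have hlog : Tendsto (fun n : ℕ => Real.log n) atTop atTop :=
      Real.tendsto_log_atTop.comp tendsto_natCast_atTop_atTop
    have h2 : Tendsto (fun n : ℕ => c * Real.log n) atTop atBot := by
      have := hlog.const_mul_atTop_of_neg hc
      exact this
    have h3 : Tendsto (fun n : ℕ => Real.exp (c * Real.log n)) atTop (nhds 0) :=
      Real.tendsto_exp_atBot.comp h2
    have := h3.const_mul ((l : ℝ) + 1)
    simpa using this
  refine squeeze_zero' (Eventually.of_forall fun n => ENNReal.toReal_nonneg)
    ?_ hg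
  filter_upwards [eventually_ge_atTop 1] with n hn using key n hn
end

section
/- Suppose n items are placed into m accounts, each item in each account independently with probability p ∈ (0,1), except that every item of a fixed set T of size at most l (with l fixed) appears in designated accounts so that each account in a family A of targeted accounts contains at least one item of T. If m = ⌈C ln n⌉ with C > l / ln(1/(1-(1-p)^l)), then with probability tending to 1 as n → ∞, every subset S disjoint from T with |S| ≤ l fails to intersect all accounts of any sub-collection of at least m accounts whose item sets (outside T) are independent Bernoulli subsets with parameter p. -/
/-! Outside `T` the memberships are independent Bernoulli(`p`) events, so a fixed `S` disjoint
from `T` with `|S| ≤ l` meets each of the `m` accounts independently, with probability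
`1 - (1 - p)^|S| ≤ q := 1 - (1 - p)^l`; it meets all of them with probability at most `q^m`.
A union bound over the at most `(l + 1) n^l` candidate sets bounds the failure probability by
`(l + 1) n^l q^⌈C ln n⌉ ≤ (l + 1) n^(l + C ln q)`, and `C > l / ln (1/q)` says exactly that this
exponent is negative. -/

open MeasureTheory ProbabilityTheory Filter

namespace ProbabilityTheory

variable {Ω ι κ : Type*} [MeasurableSpace Ω] {μ : Measure Ω}

lemma iIndepSet.measureReal_biUnion {s : ι → Set Ω} (hs : ∀ i, MeasurableSet (s i))
    (h : iIndepSet s μ) (F : Finset ι) :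
    μ.real (⋃ i ∈ F, s i) = 1 - ∏ i ∈ F, (1 - μ.real (s i)) := by
  have := h.isProbabilityMeasure
  have hcompl : μ.real (⋂ i ∈ F, (s i)ᶜ) = ∏ i ∈ F, μ.real (s i)ᶜ := by
    simp only [measureReal_def, ← ENNReal.toReal_prod]
    exact congrArg _ <| ((iIndepSet_iff_iIndep _ _).1 h).meas_biInter fun i _ =>
      (MeasurableSpace.measurableSet_generateFrom (Set.mem_singleton _)).compl
  rw [← compl_compl (⋃ i ∈ F, s i), probReal_compl_eq_one_sub
    (F.measurableSet_biUnion fun i _ => hs i).compl, Set.compl_iUnion₂, hcompl]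
  simp_rw [probReal_compl_eq_one_sub (hs _)]

lemma iIndepSet.measure_biInter_biUnion {B : ι × κ → Set Ω} (hB : ∀ ij, MeasurableSet (B ij))
    (h : iIndepSet B μ) (F : Finset ι) (J : Finset κ) :
    μ (⋂ j ∈ J, ⋃ i ∈ F, B (i, j)) = ∏ j ∈ J, μ (⋃ i ∈ F, B (i, j)) := by
  classical
  induction J using Finset.induction with
  | empty => simp [h.isProbabilityMeasure]
  | insert a J ha ih =>
    have hsplit := h.indep_generateFrom_of_disjoint hB {ij | ij.2 = a} {ij | ij.2 ∈ J}
      (Set.disjoint_left.2 fun ij h1 h2 => ha (h1 ▸ h2))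
    rw [Finset.set_biInter_insert, Finset.prod_insert ha, (Indep_iff _ _ _).1 hsplit, ih]
    · exact F.measurableSet_biUnion fun i _ =>
        MeasurableSpace.measurableSet_generateFrom ⟨(i, a), rfl, rfl⟩
    · exact J.measurableSet_biInter fun j hj => F.measurableSet_biUnion fun i _ =>
        MeasurableSpace.measurableSet_generateFrom ⟨(i, j), hj, rfl⟩

end ProbabilityTheory

section Accounts

open Finset

variable {Ω α κ : Type*} [MeasurableSpace Ω] {μ : Measure Ω} [DecidableEq α] [Fintype κ]
  {T : Finset α} {A : κ → Ω → Finset α} {p : ℝ}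

lemma measureReal_forall_inter_nonempty (hmeas : ∀ j i, MeasurableSet {ω | i ∈ A j ω})
    (hindep : iIndepSet (fun ij : {i // i ∉ T} × κ => {ω | (ij.1 : α) ∈ A ij.2 ω}) μ)
    (hprob : ∀ j i, i ∉ T → μ {ω | i ∈ A j ω} = ENNReal.ofReal p) (hp : 0 ≤ p)
    {S : Finset α} (hS : Disjoint S T) :
    μ.real {ω | ∀ j, (S ∩ A j ω).Nonempty} = (1 - (1 - p) ^ S.card) ^ Fintype.card κ := by
  set F : Finset {i // i ∉ T} := S.subtype (· ∉ T)
  have hF : F.card = S.card := by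
    rw [card_subtype, filter_true_of_mem fun i hi => disjoint_left.1 hS hi]
  have hhits : {ω | ∀ j, (S ∩ A j ω).Nonempty} =
      ⋂ j ∈ (univ : Finset κ), ⋃ i ∈ F, {ω | (i : α) ∈ A j ω} := by
    ext ω
    simp only [F, Finset.Nonempty, Set.mem_ofPred_eq, Set.mem_iInter, Set.mem_iUnion, mem_univ,
      mem_inter, mem_subtype, exists_prop, Subtype.exists, true_implies]
    exact forall_congr' fun j => exists_congr fun i =>
      ⟨fun h => ⟨disjoint_left.1 hS h.1, h⟩, fun h => h.2⟩
  have hB : ∀ ij : {i // i ∉ T} × κ, MeasurableSet {ω | (ij.1 : α) ∈ A ij.2 ω} :=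
    fun ij => hmeas ij.2 ij.1
  have hunion : ∀ j, μ.real (⋃ i ∈ F, {ω | (i : α) ∈ A j ω}) = 1 - (1 - p) ^ S.card := by
    intro j
    rw [(hindep.precomp (Prod.mk_left_injective j)).measureReal_biUnion (fun i => hB (i, j)),
      ← hF, ← prod_const]
    refine congrArg _ (prod_congr rfl fun i _ => ?_)
    simp [measureReal_def, hprob j _ i.2, hp]
  rw [hhits, measureReal_def, hindep.measure_biInter_biUnion hB, ENNReal.toReal_prod]
  simp_rw [← measureReal_def, hunion, prod_const, card_univ]

lemma card_filter_card_le_le [Fintype α] (hα : 0 < Fintype.card α) (l : ℕ) :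
    #{S : Finset α | S.card ≤ l} ≤ (l + 1) * Fintype.card α ^ l :=
  calc #{S : Finset α | S.card ≤ l}
      ≤ #((range (l + 1)).biUnion fun k => powersetCard k (univ : Finset α)) :=
        card_le_card fun S hS => mem_biUnion.2
          ⟨S.card, mem_range.2 (Nat.lt_succ_of_le (mem_filter.1 hS).2), mem_powersetCard_univ.2 rfl⟩
    _ ≤ ∑ k ∈ range (l + 1), #(powersetCard k (univ : Finset α)) := card_biUnion_le
    _ ≤ ∑ _k ∈ range (l + 1), Fintype.card α ^ l := sum_le_sum fun k hk => by
        rw [card_powersetCard, card_univ]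
        exact (Nat.choose_le_pow _ k).trans
          (Nat.pow_le_pow_right hα (Nat.lt_succ_iff.1 (mem_range.1 hk)))
    _ = (l + 1) * Fintype.card α ^ l := by rw [sum_const, card_range, smul_eq_mul]

lemma measureReal_forall_inter_nonempty_le (hmeas : ∀ j i, MeasurableSet {ω | i ∈ A j ω})
    (hindep : iIndepSet (fun ij : {i // i ∉ T} × κ => {ω | (ij.1 : α) ∈ A ij.2 ω}) μ)
    (hprob : ∀ j i, i ∉ T → μ {ω | i ∈ A j ω} = ENNReal.ofReal p) (hp0 : 0 ≤ p) (hp1 : p ≤ 1)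
    {S : Finset α} (hS : Disjoint S T) {l : ℕ} (hSl : S.card ≤ l) :
    μ.real {ω | ∀ j, (S ∩ A j ω).Nonempty} ≤ (1 - (1 - p) ^ l) ^ Fintype.card κ := by
  rw [measureReal_forall_inter_nonempty hmeas hindep hprob hp0 hS]
  have hpow : (1 - p) ^ l ≤ (1 - p) ^ S.card :=
    pow_le_pow_of_le_one (by linarith) (by linarith) hSl
  exact pow_le_pow_left₀ (sub_nonneg.2 (pow_le_one₀ (by linarith) (by linarith))) (by linarith) _

lemma measureReal_exists_forall_inter_nonempty_le [Fintype α]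
    (hmeas : ∀ j i, MeasurableSet {ω | i ∈ A j ω})
    (hindep : iIndepSet (fun ij : {i // i ∉ T} × κ => {ω | (ij.1 : α) ∈ A ij.2 ω}) μ)
    (hprob : ∀ j i, i ∉ T → μ {ω | i ∈ A j ω} = ENNReal.ofReal p) (hp0 : 0 ≤ p) (hp1 : p ≤ 1)
    (hα : 0 < Fintype.card α) (l : ℕ) :
    μ.real {ω | ∃ S : Finset α, Disjoint S T ∧ S.card ≤ l ∧ ∀ j, (S ∩ A j ω).Nonempty} ≤
      (l + 1) * Fintype.card α ^ l * (1 - (1 - p) ^ l) ^ Fintype.card κ := by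
  set 𝒮 : Finset (Finset α) := {S | Disjoint S T ∧ S.card ≤ l}
  have hcover : {ω | ∃ S : Finset α, Disjoint S T ∧ S.card ≤ l ∧ ∀ j, (S ∩ A j ω).Nonempty} =
      ⋃ S ∈ 𝒮, {ω | ∀ j, (S ∩ A j ω).Nonempty} := by
    ext ω
    simp [𝒮, and_assoc]
  have h𝒮 : (#𝒮 : ℝ) ≤ (l + 1) * Fintype.card α ^ l :=
    mod_cast (card_le_card (monotone_filter_right _ fun _ _ => And.right)).trans
      (card_filter_card_le_le hα l)
  have hq : 0 ≤ (1 - (1 - p) ^ l) ^ Fintype.card κ :=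
    pow_nonneg (sub_nonneg.2 (pow_le_one₀ (by linarith) (by linarith))) _
  calc _ ≤ ∑ S ∈ 𝒮, μ.real {ω | ∀ j, (S ∩ A j ω).Nonempty} :=
        hcover ▸ measureReal_biUnion_finset_le _ _
    _ ≤ #𝒮 * (1 - (1 - p) ^ l) ^ Fintype.card κ := by
        rw [← nsmul_eq_mul, ← sum_const]
        exact sum_le_sum fun S hS => measureReal_forall_inter_nonempty_le hmeas hindep hprob
          hp0 hp1 (mem_filter.1 hS).2.1 (mem_filter.1 hS).2.2
    _ ≤ _ := by gcongr

lemma one_sub_le_measureReal_forall_exists_inter_eq_empty [Fintype α]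
    (hmeas : ∀ j i, MeasurableSet {ω | i ∈ A j ω})
    (hindep : iIndepSet (fun ij : {i // i ∉ T} × κ => {ω | (ij.1 : α) ∈ A ij.2 ω}) μ)
    (hprob : ∀ j i, i ∉ T → μ {ω | i ∈ A j ω} = ENNReal.ofReal p) (hp0 : 0 ≤ p) (hp1 : p ≤ 1)
    (hα : 0 < Fintype.card α) (l : ℕ) :
    1 - (l + 1) * Fintype.card α ^ l * (1 - (1 - p) ^ l) ^ Fintype.card κ ≤
      μ.real {ω | ∀ S : Finset α, Disjoint S T → S.card ≤ l → ∃ j, S ∩ A j ω = ∅} := by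
  have := hindep.isProbabilityMeasure
  set good := {ω | ∀ S : Finset α, Disjoint S T → S.card ≤ l → ∃ j, S ∩ A j ω = ∅}
  have hbad : goodᶜ =
      {ω | ∃ S : Finset α, Disjoint S T ∧ S.card ≤ l ∧ ∀ j, (S ∩ A j ω).Nonempty} := by
    ext ω
    simp [good, nonempty_iff_ne_empty]
  -- `good` need not be measurable, so only subadditivity is available here.
  have hcover : 1 ≤ μ.real good + μ.real goodᶜ := by
    simpa using measureReal_union_le (μ := μ) good goodᶜ
  have hunion := measureReal_exists_forall_inter_nonempty_le hmeas hindep hprob hp0 hp1 hα l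
  rw [← hbad] at hunion
  linarith

end Accounts

lemma tendsto_pow_mul_pow_ceil_mul_log {q C : ℝ} {l : ℕ} (hq0 : 0 < q) (hq1 : q ≤ 1)
    (h : l + C * Real.log q < 0) :
    Tendsto (fun n : ℕ => (n : ℝ) ^ l * q ^ ⌈C * Real.log n⌉₊) atTop (nhds 0) := by
  have hlim : Tendsto (fun n : ℕ => (n : ℝ) ^ (l + C * Real.log q)) atTop (nhds 0) := by
    simpa [Function.comp_def] using
      (tendsto_rpow_neg_atTop (neg_pos.2 h)).comp tendsto_natCast_atTop_atTop
  refine squeeze_zero' (Eventually.of_forall fun n => by positivity) ?_ hlim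
  filter_upwards [eventually_gt_atTop 0] with n hn
  have hn' : (0 : ℝ) < n := Nat.cast_pos.2 hn
  calc (n : ℝ) ^ l * q ^ ⌈C * Real.log n⌉₊ ≤ n ^ l * q ^ (C * Real.log n) := by
        rw [← Real.rpow_natCast q]
        exact mul_le_mul_of_nonneg_left
          (Real.rpow_le_rpow_of_exponent_ge hq0 hq1 (Nat.le_ceil _)) (by positivity)
    _ = n ^ (l + C * Real.log q) := by
        rw [Real.rpow_add hn', Real.rpow_natCast, Real.rpow_def_of_pos hq0,
          Real.rpow_def_of_pos hn']
        ring_nf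

theorem stmt_15_general (p C : ℝ) (l : ℕ) (hl : 1 ≤ l) (hp0 : 0 < p) (hp1 : p < 1)
    (hC : C > l / Real.log (1 / (1 - (1 - p) ^ l)))
    (Ω : ℕ → Type*) [∀ n, MeasurableSpace (Ω n)]
    (μ : ∀ n, Measure (Ω n)) [∀ n, IsProbabilityMeasure (μ n)]
    (T : ∀ n : ℕ, Finset (Fin n))
    (A : ∀ n : ℕ, Fin ⌈C * Real.log n⌉₊ → Ω n → Finset (Fin n))
    (hmeas : ∀ (n : ℕ) (j) (i : Fin n), MeasurableSet {ω | i ∈ A n j ω})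
    (hindep : ∀ n : ℕ, iIndepSet
      (fun ij : {i : Fin n // i ∉ T n} × Fin ⌈C * Real.log n⌉₊ =>
        {ω | (ij.1 : Fin n) ∈ A n ij.2 ω}) (μ n))
    (hprob : ∀ (n : ℕ) (j) (i : Fin n), i ∉ T n →
      μ n {ω | i ∈ A n j ω} = ENNReal.ofReal p) :
    Tendsto
      (fun n : ℕ => (μ n {ω | ∀ S : Finset (Fin n), Disjoint S (T n) → S.card ≤ l →
          ∃ j, S ∩ A n j ω = ∅}).toReal)
      atTop (nhds 1) := by
  set q := 1 - (1 - p) ^ l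
  have hq0 : 0 < q := sub_pos.2 (pow_lt_one₀ (by linarith) (by linarith) (by omega))
  have hq1 : q < 1 := sub_lt_self _ (pow_pos (by linarith) _)
  have hexp : l + C * Real.log q < 0 := by
    have := (div_lt_iff₀ (Real.log_pos ((one_lt_div hq0).2 hq1))).1 hC
    rw [one_div, Real.log_inv] at this
    linarith
  have hlower : ∀ᶠ n : ℕ in atTop, 1 - (l + 1) * ((n : ℝ) ^ l * q ^ ⌈C * Real.log n⌉₊) ≤
      (μ n).real {ω | ∀ S : Finset (Fin n), Disjoint S (T n) → S.card ≤ l →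
          ∃ j, S ∩ A n j ω = ∅} := by
    filter_upwards [eventually_gt_atTop 0] with n hn
    have := one_sub_le_measureReal_forall_exists_inter_eq_empty (hmeas n) (hindep n) (hprob n)
      hp0.le hp1.le (by rwa [Fintype.card_fin]) l
    rwa [Fintype.card_fin, Fintype.card_fin, mul_assoc] at this
  refine tendsto_of_tendsto_of_tendsto_of_le_of_le' ?_ tendsto_const_nhds hlower
    (Eventually.of_forall fun n => measureReal_le_one)
  simpa using
    ((tendsto_pow_mul_pow_ceil_mul_log hq0 hq1.le hexp).const_mul ((l : ℝ) + 1)).const_sub 1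

/-- items `{1,...,n}` are placed into `m = ⌈C ln n⌉` targeted accounts; each
account contains at least one item of a fixed set `T` of size at most `l`, while the
memberships of the items outside `T` are independent Bernoulli(p) events. If
`C > l / ln(1/(1-(1-p)^l))`, then with probability tending to 1 as `n → ∞`, every set `S`
disjoint from `T` with `|S| ≤ l` fails to intersect all of the accounts. -/
theorem stmt_15 (p C : ℝ) (l : ℕ) (hl : 1 ≤ l) (hp0 : 0 < p) (hp1 : p < 1)
    (hC : C > l / Real.log (1 / (1 - (1 - p) ^ l)))
    (Ω : ℕ → Type*) [∀ n, MeasurableSpace (Ω n)]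
    (μ : ∀ n, Measure (Ω n)) [∀ n, IsProbabilityMeasure (μ n)]
    (T : ∀ n : ℕ, Finset (Fin n)) (hT : ∀ n, (T n).card ≤ l)
    (A : ∀ n : ℕ, Fin ⌈C * Real.log n⌉₊ → Ω n → Finset (Fin n))
    (htarget : ∀ (n : ℕ) (j) (ω : Ω n), ((T n) ∩ A n j ω).Nonempty)
    (hmeas : ∀ (n : ℕ) (j) (i : Fin n), MeasurableSet {ω | i ∈ A n j ω})
    (hindep : ∀ n : ℕ, iIndepSet
      (fun ij : {i : Fin n // i ∉ T n} × Fin ⌈C * Real.log n⌉₊ =>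
        {ω | (ij.1 : Fin n) ∈ A n ij.2 ω}) (μ n))
    (hprob : ∀ (n : ℕ) (j) (i : Fin n), i ∉ T n →
      μ n {ω | i ∈ A n j ω} = ENNReal.ofReal p) :
    Tendsto
      (fun n : ℕ => (μ n {ω | ∀ S : Finset (Fin n), Disjoint S (T n) → S.card ≤ l →
          ∃ j, S ∩ A n j ω = ∅}).toReal)
      atTop (nhds 1) :=
  stmt_15_general p C l hl hp0 hp1 hC Ω μ T A hmeas hindep hprob
end
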